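/- arXiv:2308.13709 — 4 statements merged into one kernel-verified Lean document; each statement's English description precedes it below -/
import Mathlib

section
/- Let A ∈ ℂ^{p×n} and B ∈ ℂ^{n×q} have SVDs A = U₁Σ₁V* and B = UΣ₂V₂*. Suppose Ω ∈ ℂ^{m×n} satisfies the entrywise bound |(V*Ω*ΩU − V*U)_{k,j}| ≤ ε for all k ∈ [p], j ∈ [q]. Then ‖AΩ*ΩB − AB‖_F ≤ ε‖A‖_F‖B‖_F. -/
/-!
Substituting the two SVDs gives `A Ωᴴ Ω B - A B = U₁ Σ₁ E Σ₂ V₂ᴴ` with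
`E = Vᴴ Ωᴴ Ω U - Vᴴ U`. The outer factors have orthonormal columns, so they do not change the
Frobenius norm, and the entries of `Σ₁ E Σ₂` are `σA k * E k j * σB j`; bounding `|E k j|` by `ε`
and summing squares gives `ε² ‖Σ₁‖² ‖Σ₂‖² = ε² ‖A‖² ‖B‖²`.
-/

open Matrix

attribute [local instance] Matrix.frobeniusNormedAddCommGroup

namespace Matrix

variable {l m n : Type*} [Fintype l] [Fintype m] [Fintype n]

theorem frobenius_norm_sq_eq_sum {α : Type*} [NormedAddCommGroup α] (A : Matrix m n α) :
    ‖A‖ ^ 2 = ∑ i, ∑ j, ‖A i j‖ ^ 2 := by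
  change ‖WithLp.toLp 2 fun i => WithLp.toLp 2 fun j => A i j‖ ^ 2 = _
  simp only [PiLp.norm_sq_eq_of_L2]

theorem frobenius_norm_eq_sqrt {α : Type*} [NormedAddCommGroup α] (A : Matrix m n α) :
    ‖A‖ = √(∑ i, ∑ j, ‖A i j‖ ^ 2) := by
  rw [← frobenius_norm_sq_eq_sum, Real.sqrt_sq (norm_nonneg A)]

section RCLike

variable {𝕜 : Type*} [RCLike 𝕜]

theorem frobenius_norm_sq_eq_re_trace (A : Matrix m n 𝕜) :
    ‖A‖ ^ 2 = RCLike.re (Aᴴ * A).trace := by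
  rw [frobenius_norm_sq_eq_sum, trace, Finset.sum_comm, map_sum]
  refine Finset.sum_congr rfl fun j _ => ?_
  rw [diag_apply, mul_apply, map_sum]
  refine Finset.sum_congr rfl fun i _ => ?_
  rw [conjTranspose_apply, RCLike.star_def, mul_comm, RCLike.mul_conj]
  norm_cast

theorem frobenius_norm_mul_of_conjTranspose_mul_eq_one [DecidableEq m] {W : Matrix l m 𝕜}
    (hW : Wᴴ * W = 1) (X : Matrix m n 𝕜) : ‖W * X‖ = ‖X‖ := by
  rw [← sq_eq_sq₀ (norm_nonneg _) (norm_nonneg _), frobenius_norm_sq_eq_re_trace,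
    frobenius_norm_sq_eq_re_trace, conjTranspose_mul, Matrix.mul_assoc, ← Matrix.mul_assoc Wᴴ,
    hW, Matrix.one_mul]

theorem frobenius_norm_mul_conjTranspose_of_conjTranspose_mul_eq_one [DecidableEq m]
    {W : Matrix l m 𝕜} (hW : Wᴴ * W = 1) (X : Matrix n m 𝕜) : ‖X * Wᴴ‖ = ‖X‖ := by
  rw [← frobenius_norm_conjTranspose, conjTranspose_mul, conjTranspose_conjTranspose,
    frobenius_norm_mul_of_conjTranspose_mul_eq_one hW, frobenius_norm_conjTranspose]

theorem frobenius_norm_mul_mul_conjTranspose_of_conjTranspose_mul_eq_one {k : Type*} [Fintype k]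
    [DecidableEq m] [DecidableEq n] {W : Matrix l m 𝕜} {W' : Matrix k n 𝕜} (hW : Wᴴ * W = 1)
    (hW' : W'ᴴ * W' = 1) (X : Matrix m n 𝕜) : ‖W * X * W'ᴴ‖ = ‖X‖ := by
  rw [frobenius_norm_mul_conjTranspose_of_conjTranspose_mul_eq_one hW',
    frobenius_norm_mul_of_conjTranspose_mul_eq_one hW]

end RCLike

theorem frobenius_norm_diagonal_mul_mul_diagonal_le {α : Type*} [NormedRing α] [DecidableEq m]
    [DecidableEq n] (a : m → α) (b : n → α) {E : Matrix m n α} {ε : ℝ} (hε : 0 ≤ ε)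
    (hE : ∀ i j, ‖E i j‖ ≤ ε) :
    ‖diagonal a * E * diagonal b‖ ≤ ε * ‖diagonal a‖ * ‖diagonal b‖ := by
  have hentry : ∀ i j, ‖(diagonal a * E * diagonal b) i j‖ ≤ ‖a i‖ * ε * ‖b j‖ := fun i j => by
    rw [mul_diagonal, diagonal_mul]
    calc ‖a i * E i j * b j‖ ≤ ‖a i‖ * ‖E i j‖ * ‖b j‖ := norm_mul₃_le
      _ ≤ ‖a i‖ * ε * ‖b j‖ := by gcongr; exact hE i j
  rw [← pow_le_pow_iff_left₀ (norm_nonneg _) (by positivity) two_ne_zero,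
    frobenius_norm_sq_eq_sum]
  calc ∑ i, ∑ j, ‖(diagonal a * E * diagonal b) i j‖ ^ 2
      ≤ ∑ i, ∑ j, (‖a i‖ * ε * ‖b j‖) ^ 2 := by gcongr with i _ j _; exact hentry i j
    _ = ε ^ 2 * ((∑ i, ‖a i‖ ^ 2) * ∑ j, ‖b j‖ ^ 2) := by
        rw [Finset.sum_mul_sum, Finset.mul_sum]
        exact Finset.sum_congr rfl fun i _ => by
          rw [Finset.mul_sum]
          exact Finset.sum_congr rfl fun j _ => by ring
    _ = (ε * ‖diagonal a‖ * ‖diagonal b‖) ^ 2 := by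
        simp only [mul_pow, mul_assoc, frobenius_norm_diagonal, PiLp.norm_sq_eq_of_L2]

end Matrix

theorem stmt_9_general {m n p q : ℕ} (ε : ℝ) (hε : 0 < ε)
    (A : Matrix (Fin p) (Fin n) ℂ) (B : Matrix (Fin n) (Fin q) ℂ)
    (U₁ : Matrix (Fin p) (Fin p) ℂ) (σA : Fin p → ℝ)
    (V : Matrix (Fin n) (Fin p) ℂ)
    (U : Matrix (Fin n) (Fin q) ℂ) (σB : Fin q → ℝ)
    (V₂ : Matrix (Fin q) (Fin q) ℂ)
    (hU₁ : U₁ᴴ * U₁ = 1) (hV : Vᴴ * V = 1) (hU : Uᴴ * U = 1) (hV₂ : V₂ᴴ * V₂ = 1)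
    (hA : A = U₁ * Matrix.diagonal (fun i => (σA i : ℂ)) * Vᴴ)
    (hB : B = U * Matrix.diagonal (fun j => (σB j : ℂ)) * V₂ᴴ)
    (Ω : Matrix (Fin m) (Fin n) ℂ)
    (h : ∀ (k : Fin p) (j : Fin q), ‖(Vᴴ * Ωᴴ * Ω * U - Vᴴ * U) k j‖ ≤ ε) :
    Real.sqrt (∑ i, ∑ j, ‖(A * Ωᴴ * Ω * B - A * B) i j‖ ^ 2)
      ≤ ε * Real.sqrt (∑ i, ∑ j, ‖A i j‖ ^ 2) * Real.sqrt (∑ i, ∑ j, ‖B i j‖ ^ 2) := by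
  set D₁ := diagonal fun i => (σA i : ℂ)
  set D₂ := diagonal fun j => (σB j : ℂ)
  have hfactor : A * Ωᴴ * Ω * B - A * B = U₁ * (D₁ * (Vᴴ * Ωᴴ * Ω * U - Vᴴ * U) * D₂) * V₂ᴴ := by
    simp only [hA, hB, Matrix.mul_sub, Matrix.sub_mul, Matrix.mul_assoc]
  simp only [← frobenius_norm_eq_sqrt]
  calc ‖A * Ωᴴ * Ω * B - A * B‖ = ‖D₁ * (Vᴴ * Ωᴴ * Ω * U - Vᴴ * U) * D₂‖ := by
        rw [hfactor, frobenius_norm_mul_mul_conjTranspose_of_conjTranspose_mul_eq_one hU₁ hV₂]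
    _ ≤ ε * ‖D₁‖ * ‖D₂‖ := frobenius_norm_diagonal_mul_mul_diagonal_le _ _ hε.le h
    _ = ε * ‖A‖ * ‖B‖ := by
        rw [hA, hB, frobenius_norm_mul_mul_conjTranspose_of_conjTranspose_mul_eq_one hU₁ hV,
          frobenius_norm_mul_mul_conjTranspose_of_conjTranspose_mul_eq_one hU hV₂]

/-- Approximate matrix multiplication from entrywise bounds on singular bases: if
`A = U₁ Σ₁ Vᴴ` and `B = U Σ₂ V₂ᴴ` are SVDs and every entry of `Vᴴ Ωᴴ Ω U - Vᴴ U` has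
absolute value at most `ε`, then `‖A Ωᴴ Ω B - A B‖_F ≤ ε ‖A‖_F ‖B‖_F`. -/
theorem stmt_9 {m n p q : ℕ} (ε : ℝ) (hε : 0 < ε)
    (A : Matrix (Fin p) (Fin n) ℂ) (B : Matrix (Fin n) (Fin q) ℂ)
    (U₁ : Matrix (Fin p) (Fin p) ℂ) (σA : Fin p → ℝ) (hσA : ∀ i, 0 ≤ σA i)
    (V : Matrix (Fin n) (Fin p) ℂ)
    (U : Matrix (Fin n) (Fin q) ℂ) (σB : Fin q → ℝ) (hσB : ∀ j, 0 ≤ σB j)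
    (V₂ : Matrix (Fin q) (Fin q) ℂ)
    (hU₁ : U₁ᴴ * U₁ = 1) (hV : Vᴴ * V = 1) (hU : Uᴴ * U = 1) (hV₂ : V₂ᴴ * V₂ = 1)
    (hA : A = U₁ * Matrix.diagonal (fun i => (σA i : ℂ)) * Vᴴ)
    (hB : B = U * Matrix.diagonal (fun j => (σB j : ℂ)) * V₂ᴴ)
    (Ω : Matrix (Fin m) (Fin n) ℂ)
    (h : ∀ (k : Fin p) (j : Fin q), ‖(Vᴴ * Ωᴴ * Ω * U - Vᴴ * U) k j‖ ≤ ε) :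
    Real.sqrt (∑ i, ∑ j, ‖(A * Ωᴴ * Ω * B - A * B) i j‖ ^ 2)
      ≤ ε * Real.sqrt (∑ i, ∑ j, ‖A i j‖ ^ 2) * Real.sqrt (∑ i, ∑ j, ‖B i j‖ ^ 2) :=
  stmt_9_general ε hε A B U₁ σA V U σB V₂ hU₁ hV hU hV₂ hA hB Ω h
end

section
/- Let 𝒳 be a d-mode tensor with side lengths n, and for each j ∈ [d] let P_j = Q_jQ_jᵀ where Q_j ∈ ℝ^{n×r} has orthonormal columns. Then ‖𝒳 − 𝒳 ×₁ P₁ ×₂ ⋯ ×_d P_d‖₂² ≤ Σ_{j=1}^d ‖𝒳 − 𝒳 ×_j P_j‖₂², where ×_j is the mode-j product and ‖·‖₂ the tensor Frobenius norm. -/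
/-!
For an orthogonal projection `p`, the decomposition `x - p y = (x - p x) + p (x - y)` is
orthogonal and `p` is a contraction, so `‖x - p y‖² ≤ ‖x - p x‖² + ‖x - y‖²`. Iterating this
along a product `p₁ ⋯ p_d` bounds `‖x - p₁ ⋯ p_d x‖²` by `∑ⱼ ‖x - pⱼ x‖²`. The full modewise
product `𝒳 ×₁ P₁ ⋯ ×_d P_d` is the action of the Kronecker product `P₁ ⊗ ⋯ ⊗ P_d`, which is the
product of the mode-`j` operators `1 ⊗ ⋯ ⊗ Pⱼ ⊗ ⋯ ⊗ 1`; these are orthogonal projections of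
the Euclidean space of tensors because each `Pⱼ = QⱼQⱼᵀ` is one.
-/

open Matrix

namespace Matrix

theorem isStarProjection_mul_conjTranspose_self {m n R : Type*} [Fintype m] [Fintype n]
    [DecidableEq n] [Semiring R] [StarRing R] {Q : Matrix m n R} (hQ : Qᴴ * Q = 1) :
    IsStarProjection (Q * Qᴴ) where
  isIdempotentElem := by
    rw [IsIdempotentElem, Matrix.mul_assoc, ← Matrix.mul_assoc Qᴴ, hQ, Matrix.one_mul]
  isSelfAdjoint := isHermitian_iff_isSelfAdjoint.mp (isHermitian_mul_conjTranspose_self Q)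

variable {ι κ R : Type*} [Fintype ι] [CommSemiring R]

def piKronecker {m n : Type*} (A : ι → Matrix m n R) : Matrix (ι → m) (ι → n) R :=
  of fun i k => ∏ l, A l (i l) (k l)

@[simp]
theorem piKronecker_apply {m n : Type*} (A : ι → Matrix m n R) (i : ι → m) (k : ι → n) :
    piKronecker A i k = ∏ l, A l (i l) (k l) := rfl

theorem conjTranspose_piKronecker [StarRing R] {m n : Type*} (A : ι → Matrix m n R) :
    (piKronecker A)ᴴ = piKronecker fun l => (A l)ᴴ := by
  ext i k
  simp [star_prod]

theorem piKronecker_mul [DecidableEq ι] [Fintype κ] (A B : ι → Matrix κ κ R) :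
    piKronecker (A * B) = piKronecker A * piKronecker B := by
  ext i k
  simp only [piKronecker_apply, Pi.mul_apply, mul_apply, Finset.prod_univ_sum,
    Fintype.piFinset_univ, Finset.prod_mul_distrib]

theorem isStarProjection_piKronecker [DecidableEq ι] [Fintype κ] [StarRing R]
    {A : ι → Matrix κ κ R} (hA : ∀ l, IsStarProjection (A l)) :
    IsStarProjection (piKronecker A) where
  isIdempotentElem := by
    rw [IsIdempotentElem, ← piKronecker_mul]
    exact congrArg piKronecker (funext fun l => (hA l).isIdempotentElem.eq)
  isSelfAdjoint := by
    rw [IsSelfAdjoint, star_eq_conjTranspose, conjTranspose_piKronecker]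
    exact congrArg piKronecker (funext fun l => (hA l).isSelfAdjoint.star_eq)

variable [DecidableEq κ]

theorem piKronecker_one : piKronecker (1 : ι → Matrix κ κ R) = 1 := by
  ext i k
  simp only [piKronecker_apply, Pi.one_apply, one_apply, Fintype.prod_boole, funext_iff]

variable [DecidableEq ι]

theorem piKronecker_mulSingle_apply_update (j : ι) (M : Matrix κ κ R) (i : ι → κ) (t : κ) :
    piKronecker (Pi.mulSingle j M) i (Function.update i j t) = M (i j) t := by
  rw [piKronecker_apply, Fintype.prod_eq_mul_prod_compl j, Pi.mulSingle_eq_same,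
    Function.update_self, Finset.prod_eq_one, mul_one]
  intro l hl
  have hl : l ≠ j := by simpa using hl
  rw [Pi.mulSingle_eq_of_ne hl, Function.update_of_ne hl, one_apply_eq]

theorem piKronecker_mulSingle_apply_eq_zero {j l : ι} (hl : l ≠ j) (M : Matrix κ κ R)
    {i k : ι → κ} (hk : i l ≠ k l) : piKronecker (Pi.mulSingle j M) i k = 0 :=
  Finset.prod_eq_zero (Finset.mem_univ l) (by rw [Pi.mulSingle_eq_of_ne hl, one_apply_ne hk])

variable [Fintype κ]

def piKroneckerHom : (ι → Matrix κ κ R) →* Matrix (ι → κ) (ι → κ) R where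
  toFun := piKronecker
  map_one' := piKronecker_one
  map_mul' := piKronecker_mul

theorem piKronecker_eq_list_prod (A : ι → Matrix κ κ R) :
    piKronecker A =
      (Finset.univ.toList.map fun j => piKronecker (Pi.mulSingle j (A j))).prod := by
  have h := Finset.noncommProd_toFinset Finset.univ.toList (fun j => Pi.mulSingle j (A j))
    (fun i _ j _ _ => Pi.mulSingle_apply_commute A i j) (Finset.nodup_toList _)
  rw [Finset.toList_toFinset, Finset.noncommProd_mulSingle] at h
  calc piKronecker A
      = piKroneckerHom (Finset.univ.toList.map fun j => Pi.mulSingle j (A j)).prod :=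
        congrArg piKronecker h
    _ = _ := by rw [map_list_prod, List.map_map]; rfl

theorem piKronecker_mulSingle_mulVec (j : ι) (M : Matrix κ κ R) (x : (ι → κ) → R)
    (i : ι → κ) :
    (piKronecker (Pi.mulSingle j M) *ᵥ x) i = ∑ t, M (i j) t * x (Function.update i j t) := by
  rw [mulVec, dotProduct,
    ← Finset.sum_subset (Finset.subset_univ (Finset.univ.image (Function.update i j))),
    Finset.sum_image fun _ _ _ _ h => Function.update_injective i j h]
  · simp only [piKronecker_mulSingle_apply_update]
  · intro k _ hk
    obtain ⟨l, hl, hkl⟩ : ∃ l ≠ j, i l ≠ k l := by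
      by_contra! h
      refine hk (Finset.mem_image.mpr ⟨k j, Finset.mem_univ _, ?_⟩)
      exact (Function.eq_update_iff.mpr ⟨rfl, fun l hl => (h l hl).symm⟩).symm
    rw [piKronecker_mulSingle_apply_eq_zero hl M hkl, zero_mul]

end Matrix

variable {𝕜 E : Type*} [RCLike 𝕜] [NormedAddCommGroup E] [InnerProductSpace 𝕜 E]
  [CompleteSpace E]

namespace IsStarProjection

variable {p : E →L[𝕜] E}

theorem apply_apply (hp : IsStarProjection p) (x : E) : p (p x) = p x :=
  congr($(hp.isIdempotentElem.eq) x)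

theorem inner_sub_apply_self_apply_eq_zero (hp : IsStarProjection p) (x z : E) :
    inner 𝕜 (x - p x) (p z) = 0 := by
  have h := hp.isSelfAdjoint.isSymmetric (x - p x) z
  simp only [ContinuousLinearMap.coe_coe, map_sub, hp.apply_apply, sub_self,
    inner_zero_left] at h
  exact h.symm

theorem norm_sub_apply_sq (hp : IsStarProjection p) (x y : E) :
    ‖x - p y‖ ^ 2 = ‖x - p x‖ ^ 2 + ‖p (x - y)‖ ^ 2 := by
  have h := norm_add_sq (𝕜 := 𝕜) (x - p x) (p (x - y))
  rwa [hp.inner_sub_apply_self_apply_eq_zero, map_zero, mul_zero, add_zero, map_sub,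
    sub_add_sub_cancel, ← map_sub] at h

theorem norm_apply_le (hp : IsStarProjection p) (x : E) : ‖p x‖ ≤ ‖x‖ := by
  have h := hp.norm_sub_apply_sq x 0
  rw [map_zero, sub_zero] at h
  nlinarith [norm_nonneg (p x), norm_nonneg x, sq_nonneg ‖x - p x‖]

theorem norm_sub_apply_sq_le (hp : IsStarProjection p) (x y : E) :
    ‖x - p y‖ ^ 2 ≤ ‖x - p x‖ ^ 2 + ‖x - y‖ ^ 2 := by
  rw [hp.norm_sub_apply_sq]
  gcongr
  exact hp.norm_apply_le _

end IsStarProjection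

theorem norm_sub_list_prod_apply_sq_le (l : List (E →L[𝕜] E))
    (hl : ∀ p ∈ l, IsStarProjection p) (x : E) :
    ‖x - l.prod x‖ ^ 2 ≤ (l.map fun p => ‖x - p x‖ ^ 2).sum := by
  induction l with
  | nil => simp
  | cons p l ih =>
    rw [List.forall_mem_cons] at hl
    rw [List.prod_cons, List.map_cons, List.sum_cons, mul_apply_eq_comp]
    grw [hl.1.norm_sub_apply_sq_le, ih hl.2]

theorem norm_sub_toEuclideanCLM_piKronecker_sq_le {ι κ : Type*} [Fintype ι] [DecidableEq ι]
    [Fintype κ] [DecidableEq κ] (A : ι → Matrix κ κ 𝕜) (hA : ∀ l, IsStarProjection (A l))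
    (x : EuclideanSpace 𝕜 (ι → κ)) :
    ‖x - toEuclideanCLM (𝕜 := 𝕜) (piKronecker A) x‖ ^ 2 ≤
      ∑ j, ‖x - toEuclideanCLM (𝕜 := 𝕜) (piKronecker (Pi.mulSingle j (A j))) x‖ ^ 2 := by
  have hmode (j : ι) : IsStarProjection (piKronecker (Pi.mulSingle j (A j))) := by
    refine isStarProjection_piKronecker fun l => ?_
    rcases eq_or_ne l j with rfl | hl
    · rw [Pi.mulSingle_eq_same]; exact hA l
    · rw [Pi.mulSingle_eq_of_ne hl]; exact .one _
  rw [piKronecker_eq_list_prod, map_list_prod, List.map_map, ← Finset.sum_map_toList]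
  refine (norm_sub_list_prod_apply_sq_le _ ?_ x).trans_eq (by rw [List.map_map]; rfl)
  simp only [List.forall_mem_map, Function.comp_apply]
  exact fun j _ => (hmode j).map _

/-- Pythagorean-type inequality for modewise orthogonal projections: with
`P_j = Q_j Q_jᵀ` orthogonal projections applied along each mode of a `d`-mode tensor `𝒳`
(side length `n`), `‖𝒳 - 𝒳 ×₁ P₁ ⋯ ×_d P_d‖₂² ≤ ∑_j ‖𝒳 - 𝒳 ×_j P_j‖₂²`.  A `d`-mode tensor
is a function `(Fin d → Fin n) → ℝ`; the full modewise product has entries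
`∑ k, (∏ j, P j (i j) (k j)) * 𝒳 k` and the single mode-`j` product has entries
`∑ t, P j (i j) t * 𝒳 (update i j t)`. -/
theorem stmt_15 {d n r : ℕ} (X : (Fin d → Fin n) → ℝ)
    (Q : Fin d → Matrix (Fin n) (Fin r) ℝ) (hQ : ∀ j, (Q j)ᵀ * Q j = 1) :
    ∑ i : Fin d → Fin n,
        (X i - ∑ k : Fin d → Fin n, (∏ j, (Q j * (Q j)ᵀ) (i j) (k j)) * X k) ^ 2
      ≤ ∑ j : Fin d, ∑ i : Fin d → Fin n,
          (X i - ∑ t : Fin n, (Q j * (Q j)ᵀ) (i j) t * X (Function.update i j t)) ^ 2 := by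
  have hP (j : Fin d) : IsStarProjection (Q j * (Q j)ᵀ) := by
    have hQj := hQ j
    rw [← conjTranspose_eq_transpose_of_trivial] at hQj ⊢
    exact isStarProjection_mul_conjTranspose_self hQj
  have h := norm_sub_toEuclideanCLM_piKronecker_sq_le _ hP (WithLp.toLp 2 X)
  simp only [toEuclideanCLM_toLp, ← WithLp.toLp_sub, EuclideanSpace.real_norm_sq_eq,
    Pi.sub_apply, piKronecker_mulSingle_mulVec] at h
  exact h
end

section
/- Let Q ∈ ℝ^{n×r} have orthonormal columns, B ∈ ℝ^{n×N}, and Φ ∈ ℝ^{m×n}. Suppose (i) ΦQ has full column rank and all eigenvalues of QᵀΦᵀΦQ lie in [1/2, 3/2] (so ‖QᵀΦᵀΦQ − I‖ ≤ 1/2 in operator norm), and (ii) ‖QᵀΦᵀΦ(I − QQᵀ)B‖_F ≤ (ε/(2√r))·‖Qᵀ‖_F·‖(I − QQᵀ)B‖_F. Then ‖(ΦQ)†ΦB‖_F ≤ (1+ε)‖B‖_F, where (ΦQ)† denotes the Moore–Penrose pseudoinverse of ΦQ. -/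
/-!
With `M = QᵀΦᵀΦQ`, the normal equations give
`(ΦQ)†ΦB = QᵀB + M⁻¹ QᵀΦᵀΦ(I - QQᵀ)B`.
The first term has Frobenius norm at most `‖B‖_F` because `QQᵀ` is an orthogonal projection.
The lower eigenvalue bound `1/2` gives `‖M⁻¹X‖_F ≤ 2‖X‖_F`, and since `‖Qᵀ‖_F = √r` the
approximate multiplication bound makes the second term at most `ε‖(I - QQᵀ)B‖_F ≤ ε‖B‖_F`.
-/

attribute [local instance] Matrix.frobeniusNormedAddCommGroup

namespace Matrix

theorem inv_gram_mul_transpose_mul_eq_add {R k m n l : Type*} [CommRing R] [Fintype k]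
    [Fintype m] [Fintype n] [DecidableEq m] [DecidableEq n] {Φ : Matrix k m R} {Q : Matrix m n R}
    (hM : IsUnit (Qᵀ * Φᵀ * Φ * Q).det) (B : Matrix m l R) :
    ((Φ * Q)ᵀ * (Φ * Q))⁻¹ * (Φ * Q)ᵀ * (Φ * B) =
      Qᵀ * B + (Qᵀ * Φᵀ * Φ * Q)⁻¹ * (Qᵀ * Φᵀ * Φ * ((1 - Q * Qᵀ) * B)) := by
  have hgram : (Φ * Q)ᵀ * (Φ * Q) = Qᵀ * Φᵀ * Φ * Q := by
    simp only [transpose_mul, Matrix.mul_assoc]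
  have hsplit : (Φ * Q)ᵀ * (Φ * B) =
      Qᵀ * Φᵀ * Φ * Q * (Qᵀ * B) + Qᵀ * Φᵀ * Φ * ((1 - Q * Qᵀ) * B) := by
    simp only [transpose_mul, Matrix.mul_assoc, Matrix.sub_mul, Matrix.mul_sub, Matrix.one_mul]
    abel
  rw [hgram, Matrix.mul_assoc, hsplit, Matrix.mul_add, ← Matrix.mul_assoc _ _ (Qᵀ * B),
    nonsing_inv_mul _ hM, Matrix.one_mul]

variable {l m n : Type*} [Fintype l] [Fintype m] [Fintype n]

theorem frobenius_norm_sq_eq_sum_sq (A : Matrix m n ℝ) : ‖A‖ ^ 2 = ∑ i, ∑ j, A i j ^ 2 := by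
  rw [frobenius_norm_def, ← Real.sqrt_eq_rpow, Real.sq_sqrt (by positivity)]
  simp only [Real.rpow_two, Real.norm_eq_abs, sq_abs]

theorem frobenius_norm_eq_sqrt_sum_sq (A : Matrix m n ℝ) : ‖A‖ = √(∑ i, ∑ j, A i j ^ 2) := by
  rw [← frobenius_norm_sq_eq_sum_sq, Real.sqrt_sq (norm_nonneg A)]

theorem frobenius_norm_sq_eq_trace (A : Matrix m n ℝ) : ‖A‖ ^ 2 = (Aᵀ * A).trace := by
  rw [frobenius_norm_sq_eq_sum_sq, Finset.sum_comm]
  simp only [trace, diag, mul_apply, transpose_apply, sq]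

theorem frobenius_norm_add_sq (A C : Matrix m n ℝ) :
    ‖A + C‖ ^ 2 = ‖A‖ ^ 2 + 2 * (Aᵀ * C).trace + ‖C‖ ^ 2 := by
  have hCA : (Cᵀ * A).trace = (Aᵀ * C).trace := by
    rw [← trace_transpose, transpose_mul, transpose_transpose]
  simp only [frobenius_norm_sq_eq_trace, transpose_add, Matrix.add_mul, Matrix.mul_add, trace_add,
    hCA]
  ring

section Orthonormal

variable [DecidableEq n] {Q : Matrix m n ℝ}

theorem frobenius_norm_mul_of_transpose_mul_self_eq_one (hQ : Qᵀ * Q = 1) (Y : Matrix n l ℝ) :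
    ‖Q * Y‖ = ‖Y‖ := by
  rw [← sq_eq_sq₀ (norm_nonneg _) (norm_nonneg _), frobenius_norm_sq_eq_trace,
    frobenius_norm_sq_eq_trace, transpose_mul, Matrix.mul_assoc, ← Matrix.mul_assoc Qᵀ, hQ,
    Matrix.one_mul]

theorem frobenius_norm_of_transpose_mul_self_eq_one (hQ : Qᵀ * Q = 1) :
    ‖Q‖ = √(Fintype.card n) := by
  rw [← Real.sqrt_sq (norm_nonneg Q), frobenius_norm_sq_eq_trace, hQ, trace_one]

theorem frobenius_norm_sq_eq_add_of_transpose_mul_self_eq_one [DecidableEq m] (hQ : Qᵀ * Q = 1)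
    (B : Matrix m l ℝ) : ‖B‖ ^ 2 = ‖Qᵀ * B‖ ^ 2 + ‖(1 - Q * Qᵀ) * B‖ ^ 2 := by
  have horth : (Q * (Qᵀ * B))ᵀ * ((1 - Q * Qᵀ) * B) = 0 := by
    simp only [transpose_mul, Matrix.mul_assoc, Matrix.sub_mul, Matrix.one_mul, Matrix.mul_sub]
    rw [← Matrix.mul_assoc Qᵀ Q, hQ, Matrix.one_mul, sub_self]
  have hsplit : B = Q * (Qᵀ * B) + (1 - Q * Qᵀ) * B := by
    rw [Matrix.sub_mul, Matrix.one_mul, Matrix.mul_assoc, add_sub_cancel]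
  conv_lhs => rw [hsplit]
  rw [frobenius_norm_add_sq, horth, trace_zero, frobenius_norm_mul_of_transpose_mul_self_eq_one hQ]
  ring

theorem frobenius_norm_transpose_mul_le [DecidableEq m] (hQ : Qᵀ * Q = 1) (B : Matrix m l ℝ) :
    ‖Qᵀ * B‖ ≤ ‖B‖ :=
  le_of_sq_le_sq (by
    rw [frobenius_norm_sq_eq_add_of_transpose_mul_self_eq_one hQ B]
    exact le_add_of_nonneg_right (sq_nonneg _)) (norm_nonneg _)

theorem frobenius_norm_one_sub_mul_transpose_mul_le [DecidableEq m] (hQ : Qᵀ * Q = 1)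
    (B : Matrix m l ℝ) : ‖(1 - Q * Qᵀ) * B‖ ≤ ‖B‖ :=
  le_of_sq_le_sq (by
    rw [frobenius_norm_sq_eq_add_of_transpose_mul_self_eq_one hQ B]
    exact le_add_of_nonneg_left (sq_nonneg _)) (norm_nonneg _)

end Orthonormal

section Coercive

variable {M : Matrix n n ℝ} {c : ℝ}

theorem sq_mul_sum_sq_le_sum_sq_mulVec_of_coercive (hc : 0 ≤ c)
    (hM : ∀ y : n → ℝ, c * ∑ i, y i ^ 2 ≤ y ⬝ᵥ (M *ᵥ y)) (y : n → ℝ) :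
    c ^ 2 * ∑ i, y i ^ 2 ≤ ∑ i, (M *ᵥ y) i ^ 2 := by
  have hcs : (y ⬝ᵥ (M *ᵥ y)) ^ 2 ≤ (∑ i, y i ^ 2) * ∑ i, (M *ᵥ y) i ^ 2 := by
    simpa [dotProduct] using Finset.sum_mul_sq_le_sq_mul_sq Finset.univ y (M *ᵥ y)
  have hS : 0 ≤ ∑ i, y i ^ 2 := by positivity
  have hcS : (c * ∑ i, y i ^ 2) ^ 2 ≤ (y ⬝ᵥ (M *ᵥ y)) ^ 2 :=
    pow_le_pow_left₀ (by positivity) (hM y) 2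
  rcases hS.eq_or_lt with hS0 | hSpos
  · rw [← hS0, mul_zero]; positivity
  · refine le_of_mul_le_mul_left ?_ hSpos
    nlinarith

theorem mul_frobenius_norm_le_of_coercive (hc : 0 ≤ c)
    (hM : ∀ y : n → ℝ, c * ∑ i, y i ^ 2 ≤ y ⬝ᵥ (M *ᵥ y)) (X : Matrix n l ℝ) :
    c * ‖X‖ ≤ ‖M * X‖ := by
  refine le_of_sq_le_sq ?_ (norm_nonneg _)
  have hcol : ∀ j, (M * X)ᵀ j = M *ᵥ Xᵀ j := fun j => by ext i; rfl
  calc (c * ‖X‖) ^ 2 = ∑ j, c ^ 2 * ∑ i, Xᵀ j i ^ 2 := by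
        rw [mul_pow, ← frobenius_norm_transpose, frobenius_norm_sq_eq_sum_sq, Finset.mul_sum]
    _ ≤ ∑ j, ∑ i, (M * X)ᵀ j i ^ 2 := Finset.sum_le_sum fun j _ => by
        rw [hcol]; exact sq_mul_sum_sq_le_sum_sq_mulVec_of_coercive hc hM _
    _ = ‖M * X‖ ^ 2 := by rw [← frobenius_norm_sq_eq_sum_sq, frobenius_norm_transpose]

theorem isUnit_det_of_coercive [DecidableEq n] (hc : 0 < c)
    (hM : ∀ y : n → ℝ, c * ∑ i, y i ^ 2 ≤ y ⬝ᵥ (M *ᵥ y)) : IsUnit M.det := by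
  refine isUnit_iff_ne_zero.mpr fun hdet => ?_
  obtain ⟨y, hy, hMy⟩ := exists_mulVec_eq_zero_iff.mpr hdet
  have hle := hM y
  rw [hMy, dotProduct_zero] at hle
  have hy0 : ∑ i, y i ^ 2 = 0 :=
    le_antisymm (nonpos_of_mul_nonpos_right hle hc) (by positivity)
  exact hy (funext fun i => pow_eq_zero_iff two_ne_zero |>.mp
    (congrFun ((Fintype.sum_eq_zero_iff_of_nonneg fun _ => sq_nonneg _).mp hy0) i))

theorem frobenius_norm_inv_mul_le_of_coercive [DecidableEq n] (hc : 0 < c)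
    (hM : ∀ y : n → ℝ, c * ∑ i, y i ^ 2 ≤ y ⬝ᵥ (M *ᵥ y)) (E : Matrix n l ℝ) :
    ‖M⁻¹ * E‖ ≤ c⁻¹ * ‖E‖ := by
  have h := mul_frobenius_norm_le_of_coercive hc.le hM (M⁻¹ * E)
  rw [← Matrix.mul_assoc, mul_nonsing_inv M (isUnit_det_of_coercive hc hM), Matrix.one_mul] at h
  rwa [le_inv_mul_iff₀ hc]

end Coercive

end Matrix

open Matrix

theorem stmt_17_general {m n N r : ℕ} (ε : ℝ) (hε : 0 < ε)
    (Q : Matrix (Fin n) (Fin r) ℝ) (hQ : Qᵀ * Q = 1)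
    (B : Matrix (Fin n) (Fin N) ℝ) (Φ : Matrix (Fin m) (Fin n) ℝ)
    (heig : ∀ y : Fin r → ℝ,
      (1 / 2) * ∑ i, y i ^ 2 ≤ y ⬝ᵥ ((Qᵀ * Φᵀ * Φ * Q) *ᵥ y) ∧
      y ⬝ᵥ ((Qᵀ * Φᵀ * Φ * Q) *ᵥ y) ≤ (3 / 2) * ∑ i, y i ^ 2)
    (hamm : Real.sqrt (∑ i, ∑ j, (Qᵀ * Φᵀ * Φ * (((1 : Matrix (Fin n) (Fin n) ℝ) - Q * Qᵀ) * B)) i j ^ 2)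
      ≤ ε / (2 * Real.sqrt r) * Real.sqrt (∑ i, ∑ j, Qᵀ i j ^ 2)
        * Real.sqrt (∑ i, ∑ j, (((1 : Matrix (Fin n) (Fin n) ℝ) - Q * Qᵀ) * B) i j ^ 2)) :
    Real.sqrt (∑ i, ∑ j, (((Φ * Q)ᵀ * (Φ * Q))⁻¹ * (Φ * Q)ᵀ * (Φ * B)) i j ^ 2)
      ≤ (1 + ε) * Real.sqrt (∑ i, ∑ j, B i j ^ 2) := by
  set M := Qᵀ * Φᵀ * Φ * Q
  set P : Matrix (Fin n) (Fin n) ℝ := 1 - Q * Qᵀ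
  set E := Qᵀ * Φᵀ * Φ * (P * B)
  have hcoer : ∀ y, 1 / 2 * ∑ i, y i ^ 2 ≤ y ⬝ᵥ (M *ᵥ y) := fun y => (heig y).1
  simp only [← frobenius_norm_eq_sqrt_sum_sq, frobenius_norm_transpose,
    frobenius_norm_of_transpose_mul_self_eq_one hQ, Fintype.card_fin] at hamm ⊢
  have hE : ‖E‖ ≤ ε / 2 * ‖P * B‖ := by
    -- `√r / √r ≤ 1` also covers `r = 0`, where the division gives `0`.
    have hscale : ε / (2 * √r) * √r ≤ ε / 2 := by
      rw [show ε / (2 * √r) * √r = ε / 2 * (√r / √r) by ring]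
      exact mul_le_of_le_one_right (by positivity) (div_self_le_one _)
    exact hamm.trans (mul_le_mul_of_nonneg_right hscale (norm_nonneg _))
  have hME : ‖M⁻¹ * E‖ ≤ 2 * ‖E‖ := by
    simpa using frobenius_norm_inv_mul_le_of_coercive one_half_pos hcoer E
  rw [inv_gram_mul_transpose_mul_eq_add (isUnit_det_of_coercive one_half_pos hcoer)]
  calc ‖Qᵀ * B + M⁻¹ * E‖ ≤ ‖Qᵀ * B‖ + ‖M⁻¹ * E‖ := norm_add_le _ _
    _ ≤ ‖B‖ + ε * ‖P * B‖ := by linarith [frobenius_norm_transpose_mul_le hQ B]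
    _ ≤ (1 + ε) * ‖B‖ := by
      rw [add_mul, one_mul]
      gcongr
      exact frobenius_norm_one_sub_mul_transpose_mul_le hQ B

/-- Affine embedding bound from OSE and AMM properties: if `ΦQ` has full column rank `r`,
the eigenvalues of `QᵀΦᵀΦQ` all lie in `[1/2, 3/2]` (encoded via the quadratic form), and
the approximate matrix multiplication bound
`‖QᵀΦᵀΦ(I - QQᵀ)B‖_F ≤ (ε/(2√r)) ‖Qᵀ‖_F ‖(I - QQᵀ)B‖_F` holds, then
`‖(ΦQ)† Φ B‖_F ≤ (1+ε) ‖B‖_F`, where `(ΦQ)† = ((ΦQ)ᵀ(ΦQ))⁻¹ (ΦQ)ᵀ` is the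
Moore–Penrose pseudoinverse of the full-column-rank matrix `ΦQ`. -/
theorem stmt_17 {m n N r : ℕ} (ε : ℝ) (hε : 0 < ε) (hr : r ≤ n) (hr0 : 0 < r)
    (Q : Matrix (Fin n) (Fin r) ℝ) (hQ : Qᵀ * Q = 1)
    (B : Matrix (Fin n) (Fin N) ℝ) (Φ : Matrix (Fin m) (Fin n) ℝ)
    (hrank : (Φ * Q).rank = r)
    (heig : ∀ y : Fin r → ℝ,
      (1 / 2) * ∑ i, y i ^ 2 ≤ y ⬝ᵥ ((Qᵀ * Φᵀ * Φ * Q) *ᵥ y) ∧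
      y ⬝ᵥ ((Qᵀ * Φᵀ * Φ * Q) *ᵥ y) ≤ (3 / 2) * ∑ i, y i ^ 2)
    (hamm : Real.sqrt (∑ i, ∑ j, (Qᵀ * Φᵀ * Φ * (((1 : Matrix (Fin n) (Fin n) ℝ) - Q * Qᵀ) * B)) i j ^ 2)
      ≤ ε / (2 * Real.sqrt r) * Real.sqrt (∑ i, ∑ j, Qᵀ i j ^ 2)
        * Real.sqrt (∑ i, ∑ j, (((1 : Matrix (Fin n) (Fin n) ℝ) - Q * Qᵀ) * B) i j ^ 2)) :
    Real.sqrt (∑ i, ∑ j, (((Φ * Q)ᵀ * (Φ * Q))⁻¹ * (Φ * Q)ᵀ * (Φ * B)) i j ^ 2)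
      ≤ (1 + ε) * Real.sqrt (∑ i, ∑ j, B i j ^ 2) :=
  stmt_17_general ε hε Q hQ B Φ heig hamm
end

section
/- Let X ∈ ℝ^{n×N} with head-tail split X = X_r + X_{\r} where X_r is the best rank-r approximation from the SVD of X, let P = I − QQᵀ for Q ∈ ℝ^{n×r} with orthonormal columns, and let Ω ∈ ℝ^{m×N}. If ‖X_{\r}X_{\r}ᵀ − X_{\r}ΩᵀΩX_{\r}ᵀ‖_F ≤ (ε/(6√r))‖X_{\r}‖_F² and |‖X_{\r}ᵀ‖_F² − ‖ΩX_{\r}ᵀ‖_F²| ≤ (ε/6)‖X_{\r}‖_F², then |tr(P(X_{\r}X_{\r}ᵀ − X_{\r}ΩᵀΩX_{\r}ᵀ)P)| ≤ (ε/3)‖X_{\r}‖_F². -/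
open Matrix

lemma trace_self_mul_transpose {k l : ℕ} (A : Matrix (Fin k) (Fin l) ℝ) :
    Matrix.trace (A * Aᵀ) = ∑ i, ∑ j, A i j ^ 2 := by
  simp [Matrix.trace, Matrix.mul_apply, Matrix.diag, sq]

lemma abs_trace_mul_le {k : ℕ} (A B : Matrix (Fin k) (Fin k) ℝ) :
    |Matrix.trace (A * B)| ≤
      Real.sqrt (∑ i, ∑ j, A i j ^ 2) * Real.sqrt (∑ i, ∑ j, B i j ^ 2) := by
  have htr : Matrix.trace (A * B) =
      ∑ p : Fin k × Fin k, A p.1 p.2 * B p.2 p.1 := by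
    rw [Fintype.sum_prod_type]
    simp [Matrix.trace, Matrix.mul_apply, Matrix.diag]
  have hA : (∑ p : Fin k × Fin k, (A p.1 p.2) ^ 2) = ∑ i, ∑ j, A i j ^ 2 := by
    rw [Fintype.sum_prod_type]
  have hB : (∑ p : Fin k × Fin k, (B p.2 p.1) ^ 2) = ∑ i, ∑ j, B i j ^ 2 := by
    rw [Fintype.sum_prod_type]
    exact Finset.sum_comm
  have hcs := Finset.sum_mul_sq_le_sq_mul_sq Finset.univ
    (fun p : Fin k × Fin k => A p.1 p.2) (fun p : Fin k × Fin k => B p.2 p.1)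
  rw [htr]
  have h1 : |∑ p : Fin k × Fin k, A p.1 p.2 * B p.2 p.1| =
      Real.sqrt ((∑ p : Fin k × Fin k, A p.1 p.2 * B p.2 p.1) ^ 2) := by
    rw [Real.sqrt_sq_eq_abs]
  rw [h1, ← Real.sqrt_mul (by positivity), ← hA, ← hB]
  exact Real.sqrt_le_sqrt hcs

/-- Bound (c) in the PCP sketch analysis: with the head-tail split `X = X_r + X_{\r}`
(`X_r` the best rank-`r` approximation of `X` in Frobenius norm), `P = I - QQᵀ` for `Q`
with `r` orthonormal columns, and AMM/JL-type bounds on `X_{\r} = X - X_r`, one has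
`|tr(P (X_{\r}X_{\r}ᵀ - X_{\r}ΩᵀΩX_{\r}ᵀ) P)| ≤ (ε/3) ‖X_{\r}‖_F²`. -/
theorem stmt_19 {m n N r : ℕ} (ε : ℝ) (hε : ε ∈ Set.Ioo (0 : ℝ) 1) (hr : r ≤ n)
    (X Xr : Matrix (Fin n) (Fin N) ℝ)
    (hXrrank : Xr.rank ≤ r)
    (hXropt : ∀ Y : Matrix (Fin n) (Fin N) ℝ, Y.rank ≤ r →
      ∑ i, ∑ j, (X - Xr) i j ^ 2 ≤ ∑ i, ∑ j, (X - Y) i j ^ 2)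
    (Q : Matrix (Fin n) (Fin r) ℝ) (hQ : Qᵀ * Q = 1)
    (Ω : Matrix (Fin m) (Fin N) ℝ)
    (h1 : Real.sqrt (∑ i, ∑ j,
        ((X - Xr) * (X - Xr)ᵀ - (X - Xr) * Ωᵀ * Ω * (X - Xr)ᵀ) i j ^ 2)
      ≤ ε / (6 * Real.sqrt r) * ∑ i, ∑ j, (X - Xr) i j ^ 2)
    (h2 : |(∑ i, ∑ j, (X - Xr)ᵀ i j ^ 2) - ∑ i, ∑ j, (Ω * (X - Xr)ᵀ) i j ^ 2|
      ≤ ε / 6 * ∑ i, ∑ j, (X - Xr) i j ^ 2) :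
    |Matrix.trace (((1 : Matrix (Fin n) (Fin n) ℝ) - Q * Qᵀ)
        * ((X - Xr) * (X - Xr)ᵀ - (X - Xr) * Ωᵀ * Ω * (X - Xr)ᵀ)
        * ((1 : Matrix (Fin n) (Fin n) ℝ) - Q * Qᵀ))|
      ≤ ε / 3 * ∑ i, ∑ j, (X - Xr) i j ^ 2 := by
  obtain ⟨hε0, hε1⟩ := hε
  set A : Matrix (Fin n) (Fin N) ℝ := X - Xr with hA
  set M : Matrix (Fin n) (Fin n) ℝ := A * Aᵀ - A * Ωᵀ * Ω * Aᵀ with hM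
  set P : Matrix (Fin n) (Fin n) ℝ := 1 - Q * Qᵀ with hP
  set S : ℝ := ∑ i, ∑ j, A i j ^ 2 with hS
  have hSnn : 0 ≤ S := by positivity
  -- P is idempotent
  have hPP : P * P = P := by
    rw [hP]
    have hqq : Q * Qᵀ * (Q * Qᵀ) = Q * Qᵀ := by
      rw [Matrix.mul_assoc, ← Matrix.mul_assoc Qᵀ Q Qᵀ, hQ, Matrix.one_mul]
    simp only [Matrix.sub_mul, Matrix.mul_sub, Matrix.one_mul, Matrix.mul_one, hqq]
    abel
  -- trace(P M P) = trace M - trace(QQᵀ M)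
  have htrace : Matrix.trace (P * M * P) =
      Matrix.trace M - Matrix.trace ((Q * Qᵀ) * M) := by
    rw [Matrix.trace_mul_cycle, hPP, hP, Matrix.sub_mul, Matrix.one_mul,
      Matrix.trace_sub]
  -- trace M bound
  have htrM : Matrix.trace M = (∑ i, ∑ j, Aᵀ i j ^ 2) - ∑ i, ∑ j, (Ω * Aᵀ) i j ^ 2 := by
    have e1 : Matrix.trace (A * Aᵀ) = ∑ i, ∑ j, Aᵀ i j ^ 2 := by
      rw [trace_self_mul_transpose]
      exact Finset.sum_comm
    have e2 : Matrix.trace (A * Ωᵀ * Ω * Aᵀ) = ∑ i, ∑ j, (Ω * Aᵀ) i j ^ 2 := by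
      have hrw : A * Ωᵀ * Ω * Aᵀ = (Ω * Aᵀ)ᵀ * (Ω * Aᵀ) := by
        rw [Matrix.transpose_mul, Matrix.transpose_transpose]
        exact Matrix.mul_assoc (A * Ωᵀ) Ω Aᵀ
      rw [hrw, Matrix.trace_mul_comm, trace_self_mul_transpose]
    rw [hM, Matrix.trace_sub, e1, e2]
  have hbM : |Matrix.trace M| ≤ ε / 6 * S := by rw [htrM]; exact h2
  -- ‖QQᵀ‖_F = √r
  have hQQ : (∑ i, ∑ j, (Q * Qᵀ) i j ^ 2) = (r : ℝ) := by
    have : (∑ i, ∑ j, (Q * Qᵀ) i j ^ 2) = Matrix.trace ((Q * Qᵀ) * (Q * Qᵀ)ᵀ) := by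
      rw [trace_self_mul_transpose]
    rw [this, Matrix.transpose_mul, Matrix.transpose_transpose]
    have hqq : Q * Qᵀ * (Q * Qᵀ) = Q * Qᵀ := by
      rw [Matrix.mul_assoc, ← Matrix.mul_assoc Qᵀ Q Qᵀ, hQ, Matrix.one_mul]
    rw [hqq, Matrix.trace_mul_comm, hQ, Matrix.trace_one]
    simp
  -- bound on trace(QQᵀ M)
  have hbQM : |Matrix.trace ((Q * Qᵀ) * M)| ≤ ε / 6 * S := by
    have hcs := abs_trace_mul_le (Q * Qᵀ) M
    rw [hQQ] at hcs
    have hMnn : 0 ≤ Real.sqrt (∑ i, ∑ j, M i j ^ 2) := Real.sqrt_nonneg _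
    rcases Nat.eq_zero_or_pos r with hr0 | hrpos
    · have : Real.sqrt (∑ i, ∑ j, M i j ^ 2) ≤ 0 := by
        have := h1
        rw [hr0] at this
        simpa [hr0] using this
      have hz : Real.sqrt (∑ i, ∑ j, M i j ^ 2) = 0 := le_antisymm this hMnn
      calc |Matrix.trace ((Q * Qᵀ) * M)| ≤ Real.sqrt (r : ℝ) * Real.sqrt (∑ i, ∑ j, M i j ^ 2) := hcs
        _ = 0 := by rw [hz, mul_zero]
        _ ≤ ε / 6 * S := by positivity
    · have hrp : (0 : ℝ) < Real.sqrt r := Real.sqrt_pos.mpr (by exact_mod_cast hrpos)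
      calc |Matrix.trace ((Q * Qᵀ) * M)|
          ≤ Real.sqrt (r : ℝ) * Real.sqrt (∑ i, ∑ j, M i j ^ 2) := hcs
        _ ≤ Real.sqrt (r : ℝ) * (ε / (6 * Real.sqrt r) * S) := by
            apply mul_le_mul_of_nonneg_left h1 (le_of_lt hrp)
        _ = ε / 6 * S := by field_simp
  calc |Matrix.trace (P * M * P)| = |Matrix.trace M - Matrix.trace ((Q * Qᵀ) * M)| := by
        rw [htrace]
    _ ≤ |Matrix.trace M| + |Matrix.trace ((Q * Qᵀ) * M)| := abs_sub _ _
    _ ≤ ε / 6 * S + ε / 6 * S := add_le_add hbM hbQM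
    _ = ε / 3 * S := by ring
end
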